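/- For all integers 0 ≤ k < n and every permutation σ of {0,…,k}, one has the equality of linear maps R^{n+1} → R^{n+1} × R^2: sd_{n,k}^σ ∘ ∂_{k+1} = sd_{n,k+1}^{σ'} ∘ ∂_{k+1}, where σ' is the permutation of {0,…,k+1} acting as σ on {0,…,k} and fixing k+1, and ∂_{k+1} : R^{n+1} → R^{n+2} is the (k+1)-st face map. -/
import Mathlib


/-!  Subdivision of simplices, modeled linearly.

The algebraic `n`-simplex over a commutative ring `R` is modeled by the hyperplane
`{t ∈ R^{n+1} : ∑ t_j = 1}` inside the free module `R^{n+1} = (Fin (n+1) → R)`; its vertices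
are the standard basis vectors, and affine-linear maps of simplices are extended to the linear
maps of the ambient free modules determined by the images of the vertices. -/

/-- The linear map `R^a → M` sending the `j`-th standard basis vector to `v j`. -/
noncomputable def ofVecs {R : Type*} [CommRing R] {a : ℕ} {M : Type*} [AddCommGroup M]
    [Module R M] (v : Fin a → M) : (Fin a → R) →ₗ[R] M where
  toFun t := ∑ j, t j • v j
  map_add' t s := by simp [add_smul, Finset.sum_add_distrib]
  map_smul' r t := by simp [smul_smul, Finset.smul_sum]

/-- The face map `∂_i : R^a → R^{a+1}`, sending `e_j` to `e_j` for `j < i` and to `e_{j+1}`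
for `j ≥ i`. -/
noncomputable def face (R : Type*) [CommRing R] (a : ℕ) (i : Fin (a + 1)) :
    (Fin a → R) →ₗ[R] (Fin (a + 1) → R) :=
  ofVecs fun j => Pi.single (i.succAbove j) 1

/-- Given centers `c^s ∈ R^{s+1}` and a nonempty subset `S ⊆ {0,…,n}` with `s+1` elements,
`cS c S = i_S (c^s) ∈ R^{n+1}` is the image of `c^s` under the linear map `i_S` sending `e_j`
to `e_{σ_S j}`, where `σ_S : {0,…,s} → S` is the order-preserving bijection.  (For `S = ∅` it
is `0`; this value is never used.) -/
noncomputable def cS {R : Type*} [CommRing R] (c : (s : ℕ) → Fin (s + 1) → R) {n : ℕ}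
    (S : Finset (Fin (n + 1))) : Fin (n + 1) → R := fun l =>
  if h : l ∈ S then
    c (S.card - 1) ⟨((S.orderIsoOfFin rfl).symm ⟨l, h⟩ : Fin S.card), by
      have h1 : 0 < S.card := Finset.card_pos.mpr ⟨l, h⟩
      have h2 := ((S.orderIsoOfFin rfl).symm ⟨l, h⟩).isLt
      omega⟩
  else 0

/-- The subdivision map `sd_n^σ : R^{n+1} → R^{n+1}`, the linear map sending the vertex `e_k`
to `c^n_{σ({0,…,k})}` for `0 ≤ k ≤ n`. -/
noncomputable def sd (R : Type*) [CommRing R] (c : (s : ℕ) → Fin (s + 1) → R) (n : ℕ)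
    (σ : Equiv.Perm (Fin (n + 1))) : (Fin (n + 1) → R) →ₗ[R] (Fin (n + 1) → R) :=
  ofVecs fun j => cS c ((Finset.Iic j).image σ)

/-- The homotopy map `sd_{n,k}^σ : R^{n+2} → R^{n+1} × R^2` (for `0 ≤ k ≤ n` and a
permutation `σ` of `{0,…,k}`, acting on the subset `{0,…,k}` of `{0,…,n}`): the linear map
sending `e_j` to `(c^n_{σ({0,…,j})}, e_0)` for `0 ≤ j ≤ k` and `e_j` to `(e_{j-1}, e_1)` for
`k+1 ≤ j ≤ n+1`. -/
noncomputable def hsd (R : Type*) [CommRing R] (c : (s : ℕ) → Fin (s + 1) → R) (n k : ℕ)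
    (hk : k ≤ n) (σ : Equiv.Perm (Fin (k + 1))) :
    (Fin (n + 2) → R) →ₗ[R] (Fin (n + 1) → R) × (Fin 2 → R) :=
  ofVecs fun j =>
    if h : (j : ℕ) ≤ k then
      (cS c ((Finset.Iic (⟨(j : ℕ), by omega⟩ : Fin (k + 1))).image
          fun a => Fin.castLE (by omega : k + 1 ≤ n + 1) (σ a)), Pi.single 0 1)
    else
      (Pi.single (⟨(j : ℕ) - 1, by have := j.isLt; omega⟩ : Fin (n + 1)) 1, Pi.single 1 1)


lemma ofVecs_single {R : Type*} [CommRing R] {a : ℕ} {M : Type*} [AddCommGroup M]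
    [Module R M] (v : Fin a → M) (i : Fin a) : ofVecs v (Pi.single i (1:R)) = v i := by
  have : ofVecs v (Pi.single i (1:R)) = ∑ j, (Pi.single i (1:R) : Fin a → R) j • v j := rfl
  rw [this, Finset.sum_eq_single i] <;> simp +contextual [Pi.single_apply]

/-- **Statement 12.** For all `0 ≤ k < n` and every permutation `σ` of `{0,…,k}`, one has
`sd_{n,k}^σ ∘ ∂_{k+1} = sd_{n,k+1}^{σ'} ∘ ∂_{k+1}` as linear maps `R^{n+1} → R^{n+1} × R^2`,
where `σ'` is the permutation of `{0,…,k+1}` acting as `σ` on `{0,…,k}` and fixing `k+1`. -/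
theorem stmt12 (R : Type*) [CommRing R] (n k : ℕ) (hk : k < n)
    (c : (s : ℕ) → Fin (s + 1) → R) (hc : ∀ s, s ≤ n → ∑ j, c s j = 1)
    (σ : Equiv.Perm (Fin (k + 1))) (σ' : Equiv.Perm (Fin (k + 2)))
    (hσ'1 : σ' (Fin.last (k + 1)) = Fin.last (k + 1))
    (hσ'2 : ∀ j : Fin (k + 1), σ' j.castSucc = (σ j).castSucc) :
    (hsd R c n k (le_of_lt hk) σ).comp (face R (n + 1) ⟨k + 1, by omega⟩) =
      (hsd R c n (k + 1) hk σ').comp (face R (n + 1) ⟨k + 1, by omega⟩) := by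
  apply Module.Basis.ext (Pi.basisFun R (Fin (n + 1)))
  intro j
  simp only [LinearMap.comp_apply, Pi.basisFun_apply]
  rw [show face R (n+1) ⟨k+1, by omega⟩ (Pi.single j 1)
      = Pi.single ((⟨k+1, by omega⟩ : Fin (n+2)).succAbove j) 1 from ofVecs_single _ _]
  rw [hsd, hsd, ofVecs_single, ofVecs_single]
  by_cases hj : (j : ℕ) ≤ k
  · have hs : ((⟨k+1, by omega⟩ : Fin (n+2)).succAbove j : ℕ) = j := by
      rw [Fin.succAbove_of_castSucc_lt]
      · rfl
      · simp [Fin.lt_def]; omega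
    rw [dif_pos (by omega), dif_pos (by omega)]
    simp only [hs]
    have hfin : (Finset.Iic (⟨(j:ℕ), by omega⟩ : Fin (k + 2))).image
        (fun a => Fin.castLE (by omega : k + 2 ≤ n + 1) (σ' a)) =
        (Finset.Iic (⟨(j:ℕ), by omega⟩ : Fin (k + 1))).image
        (fun a => Fin.castLE (by omega : k + 1 ≤ n + 1) (σ a)) := by
      ext x
      simp only [Finset.mem_image, Finset.mem_Iic]
      constructor
      · rintro ⟨b, hb, rfl⟩
        have hb' : (b : ℕ) ≤ j := hb
        have hbk : (b : ℕ) < k + 1 := by omega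
        refine ⟨⟨(b : ℕ), hbk⟩, hb', ?_⟩
        have hcs : (⟨(b : ℕ), hbk⟩ : Fin (k + 1)).castSucc = b := Fin.ext rfl
        have h2 : σ' b = (σ ⟨(b : ℕ), hbk⟩).castSucc := by rw [← hσ'2, hcs]
        rw [h2]
        exact Fin.ext rfl
      · rintro ⟨b, hb, rfl⟩
        have hb' : (b : ℕ) ≤ j := hb
        refine ⟨b.castSucc, hb', ?_⟩
        rw [hσ'2]
        exact Fin.ext rfl
    rw [hfin]
  · have hs : ((⟨k+1, by omega⟩ : Fin (n+2)).succAbove j : ℕ) = j + 1 := by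
      rw [Fin.succAbove_of_le_castSucc]
      · rfl
      · simp [Fin.le_def]; omega
    rw [dif_neg (by omega), dif_neg (by omega)]
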